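/- arXiv:1901.08174 — 9 statements merged into one kernel-verified Lean document; each statement's English description precedes it below -/
import Mathlib

section
/- For every real g ≠ 0 and all real x ≠ 0 and y, the c=1 map preserves the invariant I₁: one has I₁((x − 1)/(g·x) − x − y, x) = I₁(x, y). -/
/-- The c=1 invariant `I₁(x,y) = x·y·(x + y − 1/g) + (x + y)/g − 1/g²`. -/
noncomputable def I1 (g x y : ℝ) : ℝ := x * y * (x + y - 1/g) + (x + y)/g - 1/g^2

/-- The c=1 map preserves the invariant `I₁`. -/
theorem stmt_0 (g x y : ℝ) (hg : g ≠ 0) (hx : x ≠ 0) :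
    I1 g ((x - 1)/(g*x) - x - y) x = I1 g x y := by
  unfold I1
  field_simp
  ring
end

section
/- For every real g ≠ 0 and all real x ≠ 0 and y, the c=0 map preserves the invariant I₀: one has I₀((x − 1)/(g·x) − y, x) = I₀(x, y). -/
/-- The c=0 invariant `I₀(x,y) = x·y·(1 − g·x)·(1 − g·y) + g·x·y − x − y + 1/g`. -/
noncomputable def I0 (g x y : ℝ) : ℝ := x * y * (1 - g*x) * (1 - g*y) + g*x*y - x - y + 1/g

/-- The c=0 map preserves the invariant `I₀`. -/
theorem stmt_1 (g x y : ℝ) (hg : g ≠ 0) (hx : x ≠ 0) :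
    I0 g ((x - 1)/(g*x) - y) x = I0 g x y := by
  unfold I0
  field_simp
  ring
end

section
/- Let c ∈ {0,1}, let g be real with 0 < g < 1/(4(2+c)), and let x*₊ = (1 + √(1 − 4(2+c)g))/(2(2+c)g) and x*₋ = (1 − √(1 − 4(2+c)g))/(2(2+c)g) be the two fixed-point coordinates. The Jacobian matrix J(x) = [[1/(g·x²) − c, −1], [1, 0]] has determinant 1 for every x ≠ 0; moreover the trace τ(x) = 1/(g·x²) − c satisfies τ(x*₊)² < 4 and τ(x*₋)² > 4. Consequently J(x*₊) has a pair of non-real complex-conjugate eigenvalues, each of modulus 1 (the fixed point (x*₊, x*₊) is a center), while J(x*₋) has two distinct real eigenvalues whose product is 1 (the fixed point (x*₋, x*₋) is hyperbolic). -/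
/-!
The Jacobian at a fixed point is the companion matrix of `X² - τX + 1`, so its determinant is
`1` and its eigenvalues are the roots of that polynomial: a conjugate pair on the unit circle when
`τ² < 4`, two distinct reciprocal reals when `τ² > 4`. At a fixed point `(x, x)` the map
forces `(2 + c) g x² = x - 1`, hence `τ(x) = (2 + c)/(x - 1) - c`. The larger root satisfies
`x*₊ > 2`, giving `τ(x*₊) ∈ (-c, 2)`, while `x*₋ = 2/(1 + √(1 - 4(2 + c)g)) ∈ (1, 2)`, giving
`τ(x*₋) > 2`.
-/

open Module.End

def companion {R : Type*} [Ring R] (t : R) : Matrix (Fin 2) (Fin 2) R := !![t, -1; 1, 0]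

section Companion

variable {R : Type*}

theorem companion_det [CommRing R] (t : R) : (companion t).det = 1 := by
  simp [companion, Matrix.det_fin_two_of]

theorem companion_map {S : Type*} [Ring R] [Ring S] (f : R →+* S) (t : R) :
    (companion t).map f = companion (f t) := by
  ext i j
  fin_cases i <;> fin_cases j <;> simp [companion]

theorem companion_hasEigenvalue {K : Type*} [Field K] {t a : K} (h : a * a = t * a - 1) :
    HasEigenvalue (Matrix.toLin' (companion t)) a := by
  apply hasEigenvalue_of_hasEigenvector (x := ![a, 1])
  refine ⟨?_, fun h0 => by simpa using congrFun h0 1⟩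
  rw [mem_eigenspace_iff]
  funext i
  fin_cases i <;> simp [companion, Matrix.toLin'_apply, Matrix.mulVec, dotProduct]
  linear_combination -h

theorem exists_ne_mul_eq_one_hasEigenvalue_companion {t : ℝ} (ht : 4 < t ^ 2) :
    ∃ a b : ℝ, a ≠ b ∧ a * b = 1 ∧
      HasEigenvalue (Matrix.toLin' (companion t)) a ∧
      HasEigenvalue (Matrix.toLin' (companion t)) b := by
  have hd : 0 < t ^ 2 - 4 := by linarith
  have hd2 := Real.sq_sqrt hd.le
  have hd0 := Real.sqrt_pos.mpr hd
  refine ⟨(t + √(t ^ 2 - 4)) / 2, (t - √(t ^ 2 - 4)) / 2, by intro h; linarith,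
    by linear_combination (-1 / 4 : ℝ) * hd2, ?_, ?_⟩ <;>
    exact companion_hasEigenvalue (by linear_combination (1 / 4 : ℝ) * hd2)

theorem exists_unit_circle_hasEigenvalue_companion {t : ℝ} (ht : t ^ 2 < 4) :
    ∃ lam : ℂ, lam.im ≠ 0 ∧ ‖lam‖ = 1 ∧
      HasEigenvalue (Matrix.toLin' (companion (t : ℂ))) lam ∧
      HasEigenvalue (Matrix.toLin' (companion (t : ℂ))) (starRingEnd ℂ lam) := by
  have he : 0 < 4 - t ^ 2 := by linarith
  set e := √(4 - t ^ 2)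
  have he2 : e ^ 2 = 4 - t ^ 2 := Real.sq_sqrt he.le
  have he0 : 0 < e := Real.sqrt_pos.mpr he
  set lam : ℂ := ⟨t / 2, e / 2⟩
  have hroot : lam * lam = t * lam - 1 := by
    apply Complex.ext <;> simp [lam]
    · linear_combination (-1 / 4 : ℝ) * he2
    · ring
  have hnorm : ‖lam‖ ^ 2 = 1 := by
    rw [Complex.sq_norm, Complex.normSq_apply]
    linear_combination he2 / 4
  refine ⟨lam, by simp [lam, he0.ne'], by nlinarith [norm_nonneg lam],
    companion_hasEigenvalue hroot, companion_hasEigenvalue ?_⟩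
  simpa using congrArg (starRingEnd ℂ) hroot

end Companion

section FixedPoints

variable {k g : ℝ}

theorem mul_sq_quadratic_root {s : ℝ} (hkg : k * g ≠ 0) (hs : s ^ 2 = 1 - 4 * k * g) :
    k * g * ((1 + s) / (2 * k * g)) ^ 2 = (1 + s) / (2 * k * g) - 1 := by
  have hk : k ≠ 0 := left_ne_zero_of_mul hkg
  have hg : g ≠ 0 := right_ne_zero_of_mul hkg
  field_simp
  linear_combination hs

theorem two_lt_quadratic_root_add (hkg : 0 < k * g) (hkg4 : 4 * k * g < 1) :
    2 < (1 + √(1 - 4 * k * g)) / (2 * k * g) := by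
  rw [lt_div_iff₀ (by linarith)]
  nlinarith [Real.sqrt_nonneg (1 - 4 * k * g)]

theorem quadratic_root_sub_mem_Ioo (hkg : 0 < k * g) (hkg4 : 4 * k * g < 1) :
    (1 - √(1 - 4 * k * g)) / (2 * k * g) ∈ Set.Ioo 1 2 := by
  have hs2 := Real.sq_sqrt (by linarith : 0 ≤ 1 - 4 * k * g)
  have hs0 := Real.sqrt_pos.mpr (by linarith : 0 < 1 - 4 * k * g)
  have hs1 : √(1 - 4 * k * g) < 1 := by nlinarith
  -- rationalise, using `(1 - s)(1 + s) = 4kg`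
  have hxm : (1 - √(1 - 4 * k * g)) / (2 * k * g) = 2 / (1 + √(1 - 4 * k * g)) := by
    rw [div_eq_div_iff (by linarith) (by linarith)]
    linear_combination -hs2
  rw [hxm]
  constructor
  · rw [lt_div_iff₀ (by linarith)]; linarith
  · rw [div_lt_iff₀ (by linarith)]; linarith

variable {c x : ℝ}

theorem one_div_mul_sq_of_fixedPoint (hk : 0 < 2 + c) (hg : 0 < g) (hx0 : x ≠ 0)
    (hx : (2 + c) * g * x ^ 2 = x - 1) : 1 / (g * x ^ 2) = (2 + c) / (x - 1) := by
  rw [← hx]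
  field_simp

theorem trace_sq_lt_four_of_fixedPoint (hc : |c| < 2) (hg : 0 < g)
    (hx : (2 + c) * g * x ^ 2 = x - 1) (h2x : 2 < x) : (1 / (g * x ^ 2) - c) ^ 2 < 4 := by
  obtain ⟨hc0, hc1⟩ := abs_lt.mp hc
  rw [one_div_mul_sq_of_fixedPoint (by linarith) hg (by linarith) hx]
  have hpos : 0 < (2 + c) / (x - 1) := div_pos (by linarith) (by linarith)
  have hlt : (2 + c) / (x - 1) < 2 + c := by
    rw [div_lt_iff₀ (by linarith)]; nlinarith
  nlinarith

theorem two_lt_trace_of_fixedPoint (hk : 0 < 2 + c) (hg : 0 < g)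
    (hx : (2 + c) * g * x ^ 2 = x - 1) (hx12 : x ∈ Set.Ioo 1 2) : 2 < 1 / (g * x ^ 2) - c := by
  obtain ⟨h1x, hx2⟩ := hx12
  rw [one_div_mul_sq_of_fixedPoint hk hg (by linarith) hx]
  have : 2 + c < (2 + c) / (x - 1) := by
    rw [lt_div_iff₀ (by linarith)]; nlinarith
  linarith

end FixedPoints

/-- Fixed point classification for the maps `F_c`, `c ∈ {0,1}`: the Jacobian
`J(x) = [[1/(g·x²) − c, −1], [1, 0]]` has determinant 1; the trace `τ` satisfies
`τ(x*₊)² < 4` and `τ(x*₋)² > 4`; hence `J(x*₊)` has a pair of non-real complex-conjugate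
eigenvalues of modulus 1 (a center) and `J(x*₋)` has two distinct real eigenvalues of
product 1 (hyperbolic). -/
theorem stmt_3 (c g : ℝ) (hc : c = 0 ∨ c = 1)
    (hg0 : 0 < g) (hg1 : g < 1/(4*(2+c))) :
    let xp : ℝ := (1 + Real.sqrt (1 - 4*(2+c)*g))/(2*(2+c)*g)
    let xm : ℝ := (1 - Real.sqrt (1 - 4*(2+c)*g))/(2*(2+c)*g)
    let J : ℝ → Matrix (Fin 2) (Fin 2) ℝ := fun x => !![1/(g*x^2) - c, -1; 1, 0]
    let τ : ℝ → ℝ := fun x => 1/(g*x^2) - c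
    (∀ x : ℝ, x ≠ 0 → (J x).det = 1) ∧
    (τ xp)^2 < 4 ∧
    (τ xm)^2 > 4 ∧
    (∃ lam : ℂ, lam.im ≠ 0 ∧ ‖lam‖ = 1 ∧
      Module.End.HasEigenvalue (Matrix.toLin' ((J xp).map Complex.ofReal)) lam ∧
      Module.End.HasEigenvalue (Matrix.toLin' ((J xp).map Complex.ofReal)) (starRingEnd ℂ lam)) ∧
    (∃ a b : ℝ, a ≠ b ∧ a * b = 1 ∧
      Module.End.HasEigenvalue (Matrix.toLin' (J xm)) a ∧
      Module.End.HasEigenvalue (Matrix.toLin' (J xm)) b) := by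
  intro xp xm J τ
  have hc2 : |c| < 2 := by rcases hc with rfl | rfl <;> norm_num
  have hk : 0 < 2 + c := by linarith [neg_abs_le c]
  have hkg : 0 < (2 + c) * g := by positivity
  have hkg4 : 4 * (2 + c) * g < 1 := by
    rw [lt_div_iff₀ (by positivity)] at hg1; linarith
  have hs2 := Real.sq_sqrt (by linarith : 0 ≤ 1 - 4 * (2 + c) * g)
  have hfix_p : (2 + c) * g * xp ^ 2 = xp - 1 := mul_sq_quadratic_root hkg.ne' hs2
  have hfix_m : (2 + c) * g * xm ^ 2 = xm - 1 := by
    have := mul_sq_quadratic_root hkg.ne' ((neg_sq _).trans hs2)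
    rwa [← sub_eq_add_neg] at this
  have hτp : τ xp ^ 2 < 4 := trace_sq_lt_four_of_fixedPoint hc2 hg0 hfix_p
    (two_lt_quadratic_root_add hkg hkg4)
  have hτm : 2 < τ xm := two_lt_trace_of_fixedPoint hk hg0 hfix_m
    (quadratic_root_sub_mem_Ioo hkg hkg4)
  refine ⟨fun x _ => companion_det _, hτp, by nlinarith, ?_,
    exists_ne_mul_eq_one_hasEigenvalue_companion (by nlinarith)⟩
  rw [show (J xp).map Complex.ofReal = companion (τ xp : ℂ) from
    companion_map Complex.ofRealHom (τ xp)]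
  exact exists_unit_circle_hasEigenvalue_companion hτp
end

section
/- Let g be real with 0 < g < 1/12 and set R = (1 − √(1 − 12g))/(6g). There is a unique real χ with 0 < χ < 1 satisfying χ + 1/χ = (1 − 4gR)/(gR), and for this χ the sequence defined for integers n ≥ −1 by Rₙ = R·(1 − χ^(n+1))·(1 − χ^(n+4)) / ((1 − χ^(n+2))·(1 − χ^(n+3))) satisfies: (i) R₋₁ = 0; (ii) Rₙ = 1 + g·Rₙ·(R_(n−1) + Rₙ + R_(n+1)) for every n ≥ 0; and (iii) Rₙ → R as n → ∞. -/
/-!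
The closed form `R` is the small root of `R = 1 + 3 g R²`, with `g R ∈ (0, 1/6)`; hence
`S := (1 - 4 g R)/(g R) > 2` and `χ` is the root in `(0,1)` of `χ² - S χ + 1 = 0`. The defining
equation of `χ` parametrizes the pair `(g, R)` rationally:
`R = (1 + 4χ + χ²)/(1 + χ + χ²)` and `g = χ (1 + χ + χ²)/(1 + 4χ + χ²)²`. After this substitution
the recurrence becomes a rational identity in `χ` and `x = χⁿ`, and the limit follows from `χⁿ → 0`.
-/

open Filter Topology

noncomputable def twoPointFunction (R χ : ℝ) (n : ℤ) : ℝ :=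
  R * (1 - χ ^ (n + 1)) * (1 - χ ^ (n + 4)) / ((1 - χ ^ (n + 2)) * (1 - χ ^ (n + 3)))

lemma closedForm_spec {g R : ℝ} (hg0 : 0 < g) (hg1 : g < 1 / 12)
    (hR : R = (1 - √(1 - 12 * g)) / (6 * g)) :
    R = 1 + 3 * g * R ^ 2 ∧ 0 < g * R ∧ g * R < 1 / 6 := by
  set s := √(1 - 12 * g)
  have hs0 : 0 < s := Real.sqrt_pos.mpr (by linarith)
  have hs2 : s ^ 2 = 1 - 12 * g := Real.sq_sqrt (by linarith)
  have hgR : g * R = (1 - s) / 6 := by rw [hR]; field_simp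
  refine ⟨?_, by nlinarith, by linarith⟩
  apply mul_left_cancel₀ (show 12 * g ≠ 0 by positivity)
  linear_combination (12 - 36 * (g * R + (1 - s) / 6)) * hgR - hs2

lemma existsUnique_add_inv_eq {S : ℝ} (hS : 2 < S) :
    ∃! x : ℝ, 0 < x ∧ x < 1 ∧ x + 1 / x = S := by
  obtain ⟨x, hx0, hx1, hx⟩ : ∃ x : ℝ, 0 < x ∧ x < 1 ∧ x ^ 2 + 1 = S * x := by
    set d := √(S ^ 2 - 4)
    have hd0 : 0 ≤ d := Real.sqrt_nonneg _
    have hd2 : d ^ 2 = S ^ 2 - 4 := Real.sq_sqrt (by nlinarith)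
    exact ⟨(S - d) / 2, by nlinarith, by nlinarith, by linear_combination hd2 / 4⟩
  refine ⟨x, ⟨hx0, hx1, ?_⟩, fun y ⟨hy0, hy1, hy⟩ => ?_⟩
  · field_simp
    linear_combination hx
  · field_simp at hy
    have : (y - x) * (x * y - 1) = 0 := by linear_combination x * hy - y * hx
    rcases mul_eq_zero.mp this with h | h
    · linarith
    · nlinarith

lemma parametrization_of_add_inv_eq {g R χ : ℝ} (hR : R = 1 + 3 * g * R ^ 2) (hgR : g * R ≠ 0)
    (hχ : χ ≠ 0) (h : χ + 1 / χ = (1 - 4 * g * R) / (g * R)) :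
    R * (1 + χ + χ ^ 2) = 1 + 4 * χ + χ ^ 2 ∧
      g * (1 + 4 * χ + χ ^ 2) ^ 2 = χ * (1 + χ + χ ^ 2) := by
  have hχgR : g * R * (1 + 4 * χ + χ ^ 2) = χ := by
    rw [eq_div_iff hgR] at h
    field_simp at h
    linear_combination h
  have hRχ : R * (1 + χ + χ ^ 2) = 1 + 4 * χ + χ ^ 2 := by
    linear_combination (1 + 4 * χ + χ ^ 2) * hR + 3 * R * hχgR
  refine ⟨hRχ, ?_⟩
  linear_combination (1 + χ + χ ^ 2) * hχgR - g * (1 + 4 * χ + χ ^ 2) * hRχ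

lemma twoPointFunction_eq {R χ : ℝ} (hχ : χ ≠ 0) (n : ℤ) :
    twoPointFunction R χ n =
      R * (1 - χ ^ n * χ) * (1 - χ ^ n * χ ^ 4) / ((1 - χ ^ n * χ ^ 2) * (1 - χ ^ n * χ ^ 3)) := by
  simp [twoPointFunction, zpow_add₀ hχ]

lemma twoPointFunction_neg_one (R χ : ℝ) : twoPointFunction R χ (-1) = 0 := by
  simp [twoPointFunction]

lemma tendsto_twoPointFunction {R χ : ℝ} (h0 : 0 ≤ χ) (h1 : χ < 1) :
    Tendsto (fun n : ℕ => twoPointFunction R χ n) atTop (𝓝 R) := by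
  have hpow (k : ℕ) : Tendsto (fun n : ℕ => χ ^ ((n : ℤ) + k)) atTop (𝓝 0) := by
    simpa only [← Nat.cast_add, zpow_natCast, Function.comp_def] using
      (tendsto_pow_atTop_nhds_zero_of_lt_one h0 h1).comp (tendsto_add_atTop_nat k)
  have hsub (k : ℕ) : Tendsto (fun n : ℕ => 1 - χ ^ ((n : ℤ) + k)) atTop (𝓝 1) := by
    simpa using tendsto_const_nhds.sub (hpow k)
  simpa [twoPointFunction, Pi.div_def] using
    ((tendsto_const_nhds (x := R)).mul (hsub 1) |>.mul (hsub 4)).div ((hsub 2).mul (hsub 3))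
      (by norm_num)

lemma rational_recurrence_identity {g R χ x : ℝ} (hχ0 : 0 < χ) (hχ1 : χ < 1) (hx : x ≤ 1)
    (hR : R * (1 + χ + χ ^ 2) = 1 + 4 * χ + χ ^ 2)
    (hg : g * (1 + 4 * χ + χ ^ 2) ^ 2 = χ * (1 + χ + χ ^ 2)) :
    -- `f (χ ^ n) = twoPointFunction R χ n`
    let f : ℝ → ℝ := fun y =>
      R * (1 - y * χ) * (1 - y * χ ^ 4) / ((1 - y * χ ^ 2) * (1 - y * χ ^ 3))
    f x = 1 + g * f x * (f (x / χ) + f x + f (x * χ)) := by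
  intro f
  have hden (k : ℕ) (hk : k ≠ 0) : 1 - χ ^ k * x ≠ 0 := by
    have := pow_lt_one₀ hχ0.le hχ1 hk
    nlinarith [mul_nonneg (pow_pos hχ0 k).le (sub_nonneg.2 hx)]
  have hR' : R = (1 + 4 * χ + χ ^ 2) / (1 + χ + χ ^ 2) := by
    rw [eq_div_iff (by positivity)]; exact hR
  have hg' : g = χ * (1 + χ + χ ^ 2) / (1 + 4 * χ + χ ^ 2) ^ 2 := by
    rw [eq_div_iff (by positivity)]; exact hg
  have h1 : 1 - χ * x ≠ 0 := by simpa using hden 1 one_ne_zero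
  have h2 := hden 2 two_ne_zero
  have h3 := hden 3 three_ne_zero
  have h4 := hden 4 four_ne_zero
  have hprev : f (x / χ) = R * (1 - x) * (1 - x * χ ^ 3) / ((1 - x * χ) * (1 - x * χ ^ 2)) := by
    simp only [f]
    field_simp
  have hnext : f (x * χ) =
      R * (1 - x * χ ^ 2) * (1 - x * χ ^ 5) / ((1 - x * χ ^ 3) * (1 - x * χ ^ 4)) := by
    simp only [f]
    ring
  have hq : 1 + χ + χ ^ 2 ≠ 0 := by positivity
  have hq' : 1 + 4 * χ + χ ^ 2 ≠ 0 := by positivity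
  rw [hprev, hnext]
  simp only [f, hR', hg']
  field_simp
  ring

lemma twoPointFunction_recurrence {g R χ : ℝ} (hχ0 : 0 < χ) (hχ1 : χ < 1)
    (hR : R * (1 + χ + χ ^ 2) = 1 + 4 * χ + χ ^ 2)
    (hg : g * (1 + 4 * χ + χ ^ 2) ^ 2 = χ * (1 + χ + χ ^ 2)) {n : ℤ} (hn : 0 ≤ n) :
    twoPointFunction R χ n = 1 + g * twoPointFunction R χ n *
      (twoPointFunction R χ (n - 1) + twoPointFunction R χ n + twoPointFunction R χ (n + 1)) := by
  have hχ := hχ0.ne'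
  simp only [twoPointFunction_eq hχ, zpow_sub_one₀ hχ, zpow_add_one₀ hχ, ← div_eq_mul_inv]
  exact rational_recurrence_identity hχ0 hχ1 (zpow_le_one₀ hχ0 hχ1.le hn) hR hg

/-- Closed-form solution for the geodesic-distance generating functions of 2-legged
4-valent planar maps: there is a unique `χ ∈ (0,1)` with `χ + 1/χ = (1 − 4gR)/(gR)`,
and `Rₙ = R·(1 − χ^(n+1))·(1 − χ^(n+4))/((1 − χ^(n+2))·(1 − χ^(n+3)))` satisfies
`R₋₁ = 0`, the dPI recurrence for `n ≥ 0`, and `Rₙ → R`. -/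
theorem stmt_7 (g : ℝ) (hg0 : 0 < g) (hg1 : g < 1/12) :
    let R : ℝ := (1 - Real.sqrt (1 - 12*g))/(6*g)
    (∃! χ : ℝ, 0 < χ ∧ χ < 1 ∧ χ + 1/χ = (1 - 4*g*R)/(g*R)) ∧
    ∀ χ : ℝ, 0 < χ → χ < 1 → χ + 1/χ = (1 - 4*g*R)/(g*R) →
      let Rseq : ℤ → ℝ := fun n =>
        R * (1 - χ^(n+1)) * (1 - χ^(n+4)) / ((1 - χ^(n+2)) * (1 - χ^(n+3)))
      Rseq (-1) = 0 ∧
      (∀ n : ℤ, 0 ≤ n →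
        Rseq n = 1 + g * Rseq n * (Rseq (n-1) + Rseq n + Rseq (n+1))) ∧
      Filter.Tendsto (fun n : ℕ => Rseq n) Filter.atTop (nhds R) := by
  intro R
  obtain ⟨hR, hgR0, hgR1⟩ := closedForm_spec hg0 hg1 rfl
  have hS : 2 < (1 - 4 * g * R) / (g * R) := by
    rw [lt_div_iff₀ hgR0]
    linarith
  refine ⟨existsUnique_add_inv_eq hS, fun χ hχ0 hχ1 hχ => ?_⟩
  obtain ⟨hRχ, hgχ⟩ := parametrization_of_add_inv_eq hR hgR0.ne' hχ0.ne' hχ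
  exact ⟨twoPointFunction_neg_one R χ,
    fun n hn => twoPointFunction_recurrence hχ0 hχ1 hRχ hgχ hn, tendsto_twoPointFunction hχ0.le hχ1⟩
end

section
/- Let g be real with 0 < g < 1/8, set T = (1 − √(1 − 8g))/(4g), and let χ be a real number with 0 < χ < 1 satisfying (1 + χ)² = T·(1 + χ²). Let q be any real number such that q·χⁿ ≠ 1 for every integer n, and define x : ℤ → ℝ by xₙ = T·(1 − q·χⁿ)·(1 − q·χ^(n+4)) / ((1 − q·χ^(n+1))·(1 − q·χ^(n+3))). Then for every integer n, xₙ = 1 + g·xₙ·(x_(n−1) + x_(n+1)). -/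
set_option maxHeartbeats 1000000 in
/-- Two-parameter family of solutions of the c=0 recurrence
`xₙ = 1 + g·xₙ·(x_(n−1) + x_(n+1))`, in the closed form
`xₙ = T·(1 − q·χⁿ)·(1 − q·χ^(n+4)) / ((1 − q·χ^(n+1))·(1 − q·χ^(n+3)))`. -/
theorem stmt_8 (g χ q : ℝ) (hg0 : 0 < g) (hg1 : g < 1/8)
    (hχ0 : 0 < χ) (hχ1 : χ < 1)
    (hchar : (1 + χ)^2 = ((1 - Real.sqrt (1 - 8*g))/(4*g)) * (1 + χ^2))
    (hq : ∀ n : ℤ, q * χ^n ≠ 1) :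
    let T : ℝ := (1 - Real.sqrt (1 - 8*g))/(4*g)
    let x : ℤ → ℝ := fun n =>
      T * (1 - q * χ^n) * (1 - q * χ^(n+4)) / ((1 - q * χ^(n+1)) * (1 - q * χ^(n+3)))
    ∀ n : ℤ, x n = 1 + g * x n * (x (n-1) + x (n+1)) := by
  intro T x n
  have hχne : χ ≠ 0 := ne_of_gt hχ0
  have hgne : g ≠ 0 := ne_of_gt hg0
  have h8g : (0:ℝ) ≤ 1 - 8*g := by nlinarith
  have hs : Real.sqrt (1-8*g) ^ 2 = 1 - 8*g := Real.sq_sqrt h8g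
  have hden : (1:ℝ) + χ^2 ≠ 0 := by positivity
  have hden1 : (1:ℝ) + χ ≠ 0 := by positivity
  field_simp at hchar
  have hgval : g * (1+χ)^4 = χ*(1+χ^2) := by
    have h16 : 16*g*(g * (1+χ)^4) = 16*g*(χ*(1+χ^2)) := by
      linear_combination ((1+χ^2)^2) * hs
        - (Real.sqrt (1-8*g)*(1+χ^2) + (1+χ^2) - 4*g*(1+χ)^2) * hchar
    exact mul_left_cancel₀ (by positivity) h16
  have hTval : (1 - Real.sqrt (1-8*g))/(4*g) = (1+χ)^2/(1+χ^2) := by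
    rw [div_eq_div_iff (by positivity) hden]
    linarith [hchar]
  have hgval' : g = χ*(1+χ^2)/(1+χ)^4 := by
    field_simp
    linarith [hgval]
  have E : ∀ j : ℤ, ∀ k : ℕ, j = n - 1 + k → χ ^ j = χ ^ (n-1) * χ ^ k := by
    intro j k h; rw [h, zpow_add₀ hχne, zpow_natCast]
  have hu : ∀ k : ℕ, 1 - q * (χ^(n-1) * χ^k) ≠ 0 := by
    intro k
    have h1 := hq (n-1+k)
    rw [zpow_add₀ hχne, zpow_natCast] at h1
    exact sub_ne_zero.mpr (Ne.symm h1)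
  have han : χ ^ (n-1) ≠ 0 := zpow_ne_zero _ hχne
  simp only [x, T]
  rw [E (n+1+4) 6 (by push_cast; ring), E (n+1+3) 5 (by push_cast; ring),
      E (n+1+1) 3 (by push_cast; ring), E (n+4) 5 (by push_cast; ring),
      E (n+3) 4 (by push_cast; ring), E (n+1) 2 (by push_cast; ring),
      E (n-1+4) 4 (by push_cast; ring), E (n-1+3) 3 (by push_cast; ring),
      E (n-1+1) 1 (by push_cast; ring), E n 1 (by push_cast; ring)]
  rw [hTval]
  have h0 := hu 0
  have h1 := hu 1
  have h2 := hu 2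
  have h3 := hu 3
  have h4 := hu 4
  have h5 := hu 5
  have h6 := hu 6
  set a := χ ^ (n-1) with ha
  simp only [div_mul_eq_mul_div, div_div]
  have hDX : (1+χ^2) * ((1 - q*(a*χ^2)) * (1 - q*(a*χ^4))) ≠ 0 :=
    mul_ne_zero hden (mul_ne_zero h2 h4)
  have hDY : (1+χ^2) * ((1 - q*(a*χ^1)) * (1 - q*(a*χ^3))) ≠ 0 :=
    mul_ne_zero hden (mul_ne_zero h1 h3)
  have hDZ : (1+χ^2) * ((1 - q*(a*χ^3)) * (1 - q*(a*χ^5))) ≠ 0 :=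
    mul_ne_zero hden (mul_ne_zero h3 h5)
  rw [div_add_div _ _ hDY hDZ, ← mul_div_assoc, ← mul_div_assoc,
      div_mul_eq_mul_div, div_div,
      add_div' _ _ _ (mul_ne_zero hDX (mul_ne_zero hDY hDZ)),
      div_eq_div_iff hDX (mul_ne_zero hDX (mul_ne_zero hDY hDZ)), hgval']
  field_simp
  ring
end

section
/- Let g be real with 0 < g < 1/8 and set T = (1 − √(1 − 8g))/(4g). There is a unique real χ with 0 < χ < 1 satisfying (1 + χ)² = T·(1 + χ²), and for this χ the sequence defined for integers j ≥ −1 by Tⱼ = T·(1 − χ^(j+1))·(1 − χ^(j+5)) / ((1 − χ^(j+2))·(1 − χ^(j+4))) satisfies: (i) T₋₁ = 0; (ii) Tⱼ = 1 + g·Tⱼ·(T_(j−1) + T_(j+1)) for every j ≥ 0; and (iii) Tⱼ → T as j → ∞. -/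
open Filter Topology

/-!
Writing `χ` for the root in `(0,1)` of `(1 + χ)² = T(1 + χ²)`, one has `T = (1 + χ)²/(1 + χ²)`
and, from `T = 1 + 2gT²`, `g = χ(1 + χ²)/(1 + χ)⁴`. After these substitutions the recurrence
becomes a rational identity in `χ` and `y = χʲ`. The boundary value vanishes because of the
factor `1 - χ⁰`, and `Tⱼ → T` because `χʲ → 0`.
-/

noncomputable def treeGF (g : ℝ) : ℝ := (1 - √(1 - 8 * g)) / (4 * g)

noncomputable def heightGF (χ T : ℝ) (j : ℤ) : ℝ :=
  T * (1 - χ ^ (j + 1)) * (1 - χ ^ (j + 5)) / ((1 - χ ^ (j + 2)) * (1 - χ ^ (j + 4)))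

section treeGF

variable {g : ℝ}

theorem treeGF_eq_one_add (hg0 : g ≠ 0) (hg1 : g ≤ 1 / 8) :
    treeGF g = 1 + 2 * g * treeGF g ^ 2 := by
  have hs : √(1 - 8 * g) ^ 2 = 1 - 8 * g := Real.sq_sqrt (by linarith)
  unfold treeGF
  field_simp
  linear_combination (-2) * hs

theorem one_lt_treeGF (hg0 : 0 < g) (hg1 : g ≤ 1 / 8) : 1 < treeGF g := by
  have hs : √(1 - 8 * g) < 1 - 4 * g := by
    rw [Real.sqrt_lt' (by linarith)]
    nlinarith
  rw [treeGF, one_lt_div (by positivity)]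
  linarith

theorem treeGF_lt_two (hg0 : 0 < g) (hg1 : g < 1 / 8) : treeGF g < 2 := by
  have hs : 1 - 8 * g < √(1 - 8 * g) := by
    rw [Real.lt_sqrt (by linarith)]
    nlinarith
  rw [treeGF, div_lt_iff₀ (by positivity)]
  linarith

end treeGF

section chi

variable {T χ : ℝ}

theorem exists_chi (hT1 : 1 < T) (hT2 : T < 2) :
    ∃ χ : ℝ, 0 < χ ∧ χ < 1 ∧ (1 + χ) ^ 2 = T * (1 + χ ^ 2) := by
  set a := T - 1
  have ha0 : 0 < a := by linarith
  have hu : √(1 - a ^ 2) ^ 2 = 1 - a ^ 2 := Real.sq_sqrt (by nlinarith)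
  have hu1 : 1 - a < √(1 - a ^ 2) := by
    rw [Real.lt_sqrt (by linarith)]
    nlinarith
  have hu2 : √(1 - a ^ 2) < 1 := by
    rw [Real.sqrt_lt' one_pos]
    nlinarith
  -- the smaller root of `a χ² - 2χ + a = 0`
  refine ⟨(1 - √(1 - a ^ 2)) / a, div_pos (by linarith) ha0, ?_, ?_⟩
  · rw [div_lt_one ha0]
    linarith
  · rw [show T = a + 1 by ring]
    field_simp
    linear_combination (-a) * hu

theorem chi_unique (hT : T ≤ 2) {x y : ℝ} (hx0 : 0 < x) (hx1 : x < 1) (hy0 : 0 < y) (hy1 : y < 1)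
    (hx : (1 + x) ^ 2 = T * (1 + x ^ 2)) (hy : (1 + y) ^ 2 = T * (1 + y ^ 2)) : x = y := by
  have hfac : (x - y) * ((T - 1) * (x + y) - 2) = 0 := by
    linear_combination hy - hx
  have hne : (T - 1) * (x + y) - 2 ≠ 0 := by
    nlinarith
  linarith [(mul_eq_zero.mp hfac).resolve_right hne]

theorem existsUnique_chi (hT1 : 1 < T) (hT2 : T < 2) :
    ∃! χ : ℝ, 0 < χ ∧ χ < 1 ∧ (1 + χ) ^ 2 = T * (1 + χ ^ 2) := by
  obtain ⟨χ, hχ0, hχ1, hχ⟩ := exists_chi hT1 hT2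
  exact ⟨χ, ⟨hχ0, hχ1, hχ⟩, fun y ⟨hy0, hy1, hy⟩ =>
    chi_unique hT2.le hy0 hy1 hχ0 hχ1 hy hχ⟩

theorem g_eq_of_chi {g : ℝ} (hχ1 : 1 + χ ≠ 0) (hT : T = (1 + χ) ^ 2 / (1 + χ ^ 2))
    (hgT : T = 1 + 2 * g * T ^ 2) : g = χ * (1 + χ ^ 2) / (1 + χ) ^ 4 := by
  have hχ2 : 1 + χ ^ 2 ≠ 0 := by positivity
  subst hT
  field_simp at hgT
  rw [eq_div_iff (by positivity)]
  apply mul_right_cancel₀ (mul_ne_zero two_ne_zero hχ2)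
  linear_combination (-(1 + χ ^ 2)) * hgT

end chi

theorem heightGF_neg_one (χ T : ℝ) : heightGF χ T (-1) = 0 := by
  norm_num [heightGF]

section heightGF

variable {χ : ℝ}

theorem one_sub_zpow_ne_zero (h0 : 0 < χ) (h1 : χ < 1) {m : ℤ} (hm : 0 < m) : 1 - χ ^ m ≠ 0 :=
  (sub_pos.mpr (zpow_lt_one₀ h0 h1 hm)).ne'

theorem heightGF_recurrence {T g : ℝ} (hχ0 : χ ≠ 0) (hχ1 : 1 + χ ≠ 0)
    (hT : T = (1 + χ) ^ 2 / (1 + χ ^ 2)) (hg : g = χ * (1 + χ ^ 2) / (1 + χ) ^ 4) (j : ℤ)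
    (hden : ∀ k ∈ Finset.Icc (1 : ℤ) 5, 1 - χ ^ (j + k) ≠ 0) :
    heightGF χ T j = 1 + g * heightGF χ T j * (heightGF χ T (j - 1) + heightGF χ T (j + 1)) := by
  have hχ2 : 1 + χ ^ 2 ≠ 0 := by positivity
  have h1 := hden 1 (by decide)
  have h2 := hden 2 (by decide)
  have h3 := hden 3 (by decide)
  have h4 := hden 4 (by decide)
  have h5 := hden 5 (by decide)
  simp only [heightGF, sub_eq_add_neg j, add_assoc, zpow_add₀ hχ0 j] at h1 h2 h3 h4 h5 ⊢
  norm_num only at h1 h2 h3 h4 h5 ⊢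
  subst hT hg
  generalize χ ^ j = y at h1 h2 h3 h4 h5 ⊢
  simp only [zpow_ofNat, pow_one, mul_comm y] at h1 h2 h3 h4 h5 ⊢
  field_simp
  ring

theorem tendsto_heightGF (T : ℝ) (hχ : |χ| < 1) :
    Tendsto (fun n : ℕ => heightGF χ T n) atTop (𝓝 T) := by
  have hpow (k : ℕ) : Tendsto (fun n : ℕ => 1 - χ ^ (n + k)) atTop (𝓝 1) := by
    simpa using tendsto_const_nhds.sub
      ((tendsto_pow_atTop_nhds_zero_of_abs_lt_one hχ).comp (tendsto_add_atTop_nat k))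
  have hlim := ((tendsto_const_nhds (x := T)).mul (hpow 1)).mul (hpow 5) |>.div
    ((hpow 2).mul (hpow 4)) (by norm_num)
  simp only [mul_one, div_one] at hlim
  refine hlim.congr fun n => ?_
  simp only [heightGF]
  norm_cast

end heightGF

/-- Closed-form solution for the label-height generating functions of labeled plane
trees: there is a unique `χ ∈ (0,1)` with `(1 + χ)² = T·(1 + χ²)`, and
`Tⱼ = T·(1 − χ^(j+1))·(1 − χ^(j+5))/((1 − χ^(j+2))·(1 − χ^(j+4)))` satisfies
`T₋₁ = 0`, the c=0 recurrence for `j ≥ 0`, and `Tⱼ → T`. -/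
theorem stmt_9 (g : ℝ) (hg0 : 0 < g) (hg1 : g < 1/8) :
    let T : ℝ := (1 - Real.sqrt (1 - 8*g))/(4*g)
    (∃! χ : ℝ, 0 < χ ∧ χ < 1 ∧ (1 + χ)^2 = T * (1 + χ^2)) ∧
    ∀ χ : ℝ, 0 < χ → χ < 1 → (1 + χ)^2 = T * (1 + χ^2) →
      let Tseq : ℤ → ℝ := fun j =>
        T * (1 - χ^(j+1)) * (1 - χ^(j+5)) / ((1 - χ^(j+2)) * (1 - χ^(j+4)))
      Tseq (-1) = 0 ∧
      (∀ j : ℤ, 0 ≤ j →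
        Tseq j = 1 + g * Tseq j * (Tseq (j-1) + Tseq (j+1))) ∧
      Filter.Tendsto (fun j : ℕ => Tseq j) Filter.atTop (nhds T) := by
  intro T
  have hT1 : 1 < treeGF g := one_lt_treeGF hg0 hg1.le
  have hT2 : treeGF g < 2 := treeGF_lt_two hg0 hg1
  refine ⟨existsUnique_chi hT1 hT2, fun χ hχ0 hχ1 hχ => ?_⟩
  have hTχ : T = (1 + χ) ^ 2 / (1 + χ ^ 2) := eq_div_of_mul_eq (by positivity) hχ.symm
  have hgχ : g = χ * (1 + χ ^ 2) / (1 + χ) ^ 4 :=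
    g_eq_of_chi (by positivity) hTχ (treeGF_eq_one_add hg0.ne' hg1.le)
  refine ⟨heightGF_neg_one χ T, fun j hj => ?_,
    tendsto_heightGF T (abs_lt.mpr ⟨by linarith, hχ1⟩)⟩
  exact heightGF_recurrence hχ0.ne' (by positivity) hTχ hgχ j fun k hk =>
    one_sub_zpow_ne_zero hχ0 hχ1 (by linarith [(Finset.mem_Icc.mp hk).1])
end

section
/- Let g be real with 0 < g < 1/12 and set γ = √(1 − 12g), α = (4g + 1)/(12g²), e₁ = −(1 + 36g + (12g − 1)·γ)/(54g³), g₂ = 12α² + 2e₁/g, g₃ = −8α³ − (2e₁/g)·α − e₁², and r₂ = −4γ(γ + 2)/((γ + 1)²(γ − 1)²). Then g₂ = 12·r₂² and g₃ = 8·r₂³; equivalently, for every real z, −4z³ + g₂·z − g₃ = −4·(z + 2r₂)·(z − r₂)², so on the separatrix energy level e₁ the Weierstrass cubic acquires a double root at r₂. -/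
/-- On the separatrix energy level `e₁` of the c=1 system, the Weierstrass cubic
`−4z³ + g₂z − g₃` acquires a double root at `r₂`: one has `g₂ = 12r₂²`, `g₃ = 8r₂³`
and `−4z³ + g₂z − g₃ = −4(z + 2r₂)(z − r₂)²` for all `z`. -/
theorem stmt_13 (g : ℝ) (hg0 : 0 < g) (hg1 : g < 1/12) :
    let γ : ℝ := Real.sqrt (1 - 12*g)
    let α : ℝ := (4*g + 1)/(12*g^2)
    let e₁ : ℝ := -(1 + 36*g + (12*g - 1)*γ)/(54*g^3)
    let g₂ : ℝ := 12*α^2 + 2*e₁/g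
    let g₃ : ℝ := -8*α^3 - (2*e₁/g)*α - e₁^2
    let r₂ : ℝ := -4*γ*(γ + 2)/((γ + 1)^2*(γ - 1)^2)
    g₂ = 12*r₂^2 ∧ g₃ = 8*r₂^3 ∧
    ∀ z : ℝ, -4*z^3 + g₂*z - g₃ = -4*(z + 2*r₂)*(z - r₂)^2 := by
  intro γ α e₁ g₂ g₃ r₂
  have h12 : (0:ℝ) < 1 - 12*g := by linarith
  have hγ2 : γ^2 = 1 - 12*g := Real.sq_sqrt h12.le
  have hγ0 : 0 ≤ γ := Real.sqrt_nonneg _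
  have hγ1 : γ < 1 := by
    have : γ^2 < 1^2 := by rw [hγ2]; nlinarith
    nlinarith
  have hg : g = (1 - γ^2)/12 := by rw [hγ2]; ring
  have hp : γ + 1 ≠ 0 := by positivity
  have hm : γ - 1 ≠ 0 := by intro h; nlinarith
  have hgne : g ≠ 0 := hg0.ne'
  have h1 : 1 - γ^2 ≠ 0 := by rw [hg] at hgne; intro h; apply hgne; rw [h]; norm_num
  have hG2 : g₂ = 12*r₂^2 := by
    show 12*α^2 + 2*e₁/g = 12*r₂^2
    simp only [α, e₁, r₂, hg]
    field_simp
    ring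
  have hG3 : g₃ = 8*r₂^3 := by
    show -8*α^3 - (2*e₁/g)*α - e₁^2 = 8*r₂^3
    simp only [α, e₁, r₂, hg]
    field_simp
    ring
  refine ⟨hG2, hG3, fun z => ?_⟩
  rw [hG2, hG3]; ring
end

section
/- Let r₂ be a real number with r₂ < 0 and set s = √(−3r₂). Then the function ℘_d(ξ) = −r₂ − 3r₂/ sinh(s·ξ)² is differentiable at every real ξ ≠ 0 with derivative ℘_d'(ξ) = −2·(−3r₂)^(3/2)·cosh(s·ξ)/sinh(s·ξ)³, and for every real ξ ≠ 0 this derivative satisfies the Weierstrass differential equation ℘_d'(ξ)² = 4·℘_d(ξ)³ − 12·r₂²·℘_d(ξ) − 8·r₂³. -/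
/-- Degenerate Weierstrass ℘-function `℘_d(ξ) = −r₂ − 3r₂/sinh(sξ)²`, `s = √(−3r₂)`. -/
noncomputable def pd (r₂ ξ : ℝ) : ℝ :=
  -r₂ - 3*r₂ / (Real.sinh (Real.sqrt (-3*r₂) * ξ))^2

/-- Its derivative `℘_d'(ξ) = −2(−3r₂)^(3/2)·cosh(sξ)/sinh(sξ)³`. -/
noncomputable def pd' (r₂ ξ : ℝ) : ℝ :=
  -2*(-3*r₂)^((3:ℝ)/2) * Real.cosh (Real.sqrt (-3*r₂) * ξ) /
    (Real.sinh (Real.sqrt (-3*r₂) * ξ))^3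

/-- Degenerate Weierstrass ζ-function `ζ_d(ξ) = r₂ξ + s·coth(sξ)`, `s = √(−3r₂)`. -/
noncomputable def zd (r₂ ξ : ℝ) : ℝ :=
  r₂*ξ + Real.sqrt (-3*r₂) *
    (Real.cosh (Real.sqrt (-3*r₂) * ξ) / Real.sinh (Real.sqrt (-3*r₂) * ξ))

/-- Degenerate Weierstrass σ-function `σ_d(ξ) = exp(r₂ξ²/2)·sinh(sξ)/s`, `s = √(−3r₂)`. -/
noncomputable def sd (r₂ ξ : ℝ) : ℝ :=
  Real.exp (r₂*ξ^2/2) * Real.sinh (Real.sqrt (-3*r₂) * ξ) / Real.sqrt (-3*r₂)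

/-! The cubic `4p³ − 12r₂²p − 8r₂³` has the double root `p = −r₂` and the simple root `p = 2r₂`.
With `s² = −3r₂`, `℘_d + r₂ = s²/sinh²` and `℘_d − 2r₂ = s²cosh²/sinh²`, so the right-hand side
of the differential equation is `4s⁶cosh²/sinh⁶`, which is `(℘_d')²`. -/

open Real

lemma Real.rpow_three_halves {x : ℝ} (hx : 0 ≤ x) : x ^ (3 / 2 : ℝ) = x * √x := by
  rw [show (3 / 2 : ℝ) = 1 + 1 / 2 by norm_num, rpow_add' hx (by norm_num), rpow_one,
    sqrt_eq_rpow]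

lemma hasDerivAt_sub_div_sinh_sq (a b s x : ℝ) (hx : sinh (s * x) ≠ 0) :
    HasDerivAt (fun y => a - b / sinh (s * y) ^ 2)
      (2 * b * s * cosh (s * x) / sinh (s * x) ^ 3) x := by
  have hsinh : HasDerivAt (fun y => sinh (s * y)) (cosh (s * x) * s) x := by
    simpa using ((hasDerivAt_id x).const_mul s).sinh
  refine ((hasDerivAt_const x a).sub
    ((hasDerivAt_const x b).div (hsinh.pow 2) (pow_ne_zero 2 hx))).congr_deriv ?_
  simp only [Pi.pow_apply]
  field_simp
  ring

lemma four_mul_cube_sub_eq (p r : ℝ) :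
    4 * p ^ 3 - 12 * r ^ 2 * p - 8 * r ^ 3 = 4 * (p + r) ^ 2 * (p - 2 * r) := by
  ring

lemma pd_add_self (r₂ ξ : ℝ) : pd r₂ ξ + r₂ = -3 * r₂ / sinh (√(-3 * r₂) * ξ) ^ 2 := by
  rw [pd]
  ring

lemma pd_sub_two_mul_self {r₂ ξ : ℝ} (hξ : sinh (√(-3 * r₂) * ξ) ≠ 0) :
    pd r₂ ξ - 2 * r₂ = -3 * r₂ * cosh (√(-3 * r₂) * ξ) ^ 2 / sinh (√(-3 * r₂) * ξ) ^ 2 := by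
  rw [pd, cosh_sq]
  generalize sinh (√(-3 * r₂) * ξ) = t at hξ ⊢
  field_simp
  ring

lemma pd'_sq {r₂ : ℝ} (hr : r₂ ≤ 0) (ξ : ℝ) :
    pd' r₂ ξ ^ 2 = 4 * (-3 * r₂) ^ 3 * cosh (√(-3 * r₂) * ξ) ^ 2 / sinh (√(-3 * r₂) * ξ) ^ 6 := by
  have hk : 0 ≤ -3 * r₂ := by linarith
  rw [pd', rpow_three_halves hk, div_pow, mul_pow, mul_pow, mul_pow, sq_sqrt hk]
  ring

lemma sinh_sqrt_mul_ne_zero {r₂ ξ : ℝ} (hr : r₂ < 0) (hξ : ξ ≠ 0) : sinh (√(-3 * r₂) * ξ) ≠ 0 :=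
  sinh_ne_zero.mpr (mul_ne_zero (sqrt_pos.mpr (by linarith)).ne' hξ)

lemma hasDerivAt_pd {r₂ ξ : ℝ} (hr : r₂ ≤ 0) (hξ : sinh (√(-3 * r₂) * ξ) ≠ 0) :
    HasDerivAt (pd r₂) (pd' r₂ ξ) ξ := by
  refine (hasDerivAt_sub_div_sinh_sq (-r₂) (3 * r₂) _ ξ hξ).congr_deriv ?_
  rw [pd', rpow_three_halves (by linarith)]
  ring

/-- `℘_d` is differentiable away from 0 with derivative `℘_d'`, and satisfies the
Weierstrass differential equation `(℘_d')² = 4℘_d³ − 12r₂²℘_d − 8r₂³`. -/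
theorem stmt_14 (r₂ : ℝ) (hr : r₂ < 0) (ξ : ℝ) (hξ : ξ ≠ 0) :
    HasDerivAt (pd r₂) (pd' r₂ ξ) ξ ∧
    (pd' r₂ ξ)^2 = 4*(pd r₂ ξ)^3 - 12*r₂^2*(pd r₂ ξ) - 8*r₂^3 := by
  have hsinh := sinh_sqrt_mul_ne_zero hr hξ
  refine ⟨hasDerivAt_pd hr.le hsinh, ?_⟩
  rw [four_mul_cube_sub_eq, pd_add_self, pd_sub_two_mul_self hsinh, pd'_sq hr.le]
  field_simp
end

section
/- Let r₂ be a real number with r₂ < 0 and set s = √(−3r₂). For all real u and v with u ≠ 0, v ≠ 0, u + v ≠ 0 and u − v ≠ 0 (so in particular ℘_d(u) ≠ ℘_d(v)), the degenerate addition law holds: ℘_d(u + v) + ℘_d(u) + ℘_d(v) = (1/4)·((℘_d'(u) − ℘_d'(v))/(℘_d(u) − ℘_d(v)))², where ℘_d'(ξ) = −2·(−3r₂)^(3/2)·cosh(s·ξ)/sinh(s·ξ)³. -/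
/-!
Writing `s = √(−3r₂)` and `c = coth(sξ)`, the identity `1/sinh² = coth² − 1` turns `℘_d` and `℘_d'`
into the polynomials `s²c² − 2s²/3` and `−2s³c(c² − 1)`, while `coth` has the rational addition
law `coth(x + y) = (1 + coth x coth y)/(coth x + coth y)`. The degenerate addition law thereby
becomes an identity between rational functions of `a = coth(su)` and `b = coth(sv)`; after
cancelling the common factor `a − b` from the difference quotient it is a polynomial identity.
-/

open Real

noncomputable def coth (x : ℝ) : ℝ := cosh x / sinh x

lemma coth_add_coth {x y : ℝ} (hx : sinh x ≠ 0) (hy : sinh y ≠ 0) :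
    coth x + coth y = sinh (x + y) / (sinh x * sinh y) := by
  rw [coth, coth, sinh_add]
  field_simp
  ring

lemma coth_sub_coth {x y : ℝ} (hx : sinh x ≠ 0) (hy : sinh y ≠ 0) :
    coth x - coth y = sinh (y - x) / (sinh x * sinh y) := by
  rw [coth, coth, sinh_sub]
  field_simp

lemma coth_add {x y : ℝ} (hx : sinh x ≠ 0) (hy : sinh y ≠ 0) :
    coth (x + y) = (1 + coth x * coth y) / (coth x + coth y) := by
  rw [coth_add_coth hx hy, coth, coth, coth, cosh_add, sinh_add]
  field_simp
  ring

lemma one_div_sinh_sq_eq_coth_sq_sub_one {x : ℝ} (hx : sinh x ≠ 0) :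
    1 / sinh x ^ 2 = coth x ^ 2 - 1 := by
  rw [coth, div_pow, cosh_sq]
  field_simp
  ring

noncomputable def wpCoth (s c : ℝ) : ℝ := s ^ 2 * c ^ 2 - 2 * s ^ 2 / 3

noncomputable def wpCothDeriv (s c : ℝ) : ℝ := -2 * s ^ 3 * c * (c ^ 2 - 1)

lemma wpCoth_sub_wpCoth (s a b : ℝ) : wpCoth s a - wpCoth s b = s ^ 2 * (a - b) * (a + b) := by
  unfold wpCoth; ring

lemma wpCothDeriv_sub_wpCothDeriv (s a b : ℝ) :
    wpCothDeriv s a - wpCothDeriv s b = -2 * s ^ 3 * (a - b) * (a ^ 2 + a * b + b ^ 2 - 1) := by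
  unfold wpCothDeriv; ring

theorem wpCoth_add_law {s a b : ℝ} (hs : s ≠ 0) (hab : a + b ≠ 0) (hab' : a - b ≠ 0) :
    wpCoth s ((1 + a * b) / (a + b)) + wpCoth s a + wpCoth s b =
      1 / 4 * ((wpCothDeriv s a - wpCothDeriv s b) / (wpCoth s a - wpCoth s b)) ^ 2 := by
  have slope : (wpCothDeriv s a - wpCothDeriv s b) / (wpCoth s a - wpCoth s b) =
      -2 * s * (a ^ 2 + a * b + b ^ 2 - 1) / (a + b) := by
    rw [wpCoth_sub_wpCoth, wpCothDeriv_sub_wpCothDeriv]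
    field_simp
  rw [slope]
  unfold wpCoth
  field_simp
  ring

lemma pd_eq_wpCoth {r₂ ξ : ℝ} (hr : r₂ ≤ 0) (hξ : sinh (√(-3 * r₂) * ξ) ≠ 0) :
    pd r₂ ξ = wpCoth √(-3 * r₂) (coth (√(-3 * r₂) * ξ)) := by
  have hs : √(-3 * r₂) ^ 2 = -3 * r₂ := sq_sqrt (by linarith)
  rw [pd, wpCoth, hs]
  linear_combination (-3 * r₂) * one_div_sinh_sq_eq_coth_sq_sub_one hξ

lemma pd'_eq_wpCothDeriv {r₂ : ℝ} (hr : r₂ ≤ 0) (ξ : ℝ) :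
    pd' r₂ ξ = wpCothDeriv √(-3 * r₂) (coth (√(-3 * r₂) * ξ)) := by
  have hpow : (-3 * r₂) ^ ((3 : ℝ) / 2) = √(-3 * r₂) ^ 3 := by
    rw [sqrt_eq_rpow, ← rpow_natCast, ← rpow_mul (by linarith)]
    norm_num
  by_cases hξ : sinh (√(-3 * r₂) * ξ) = 0
  · simp only [pd', wpCothDeriv, coth, hξ]
    simp
  · rw [pd', wpCothDeriv, hpow, ← one_div_sinh_sq_eq_coth_sq_sub_one hξ, coth]
    ring

/-- Degenerate addition law:
`℘_d(u+v) + ℘_d(u) + ℘_d(v) = (1/4)·((℘_d'(u) − ℘_d'(v))/(℘_d(u) − ℘_d(v)))²`. -/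
theorem stmt_19 (r₂ : ℝ) (hr : r₂ < 0) (u v : ℝ) (hu : u ≠ 0) (hv : v ≠ 0)
    (huv : u + v ≠ 0) (huv' : u - v ≠ 0) :
    pd r₂ (u + v) + pd r₂ u + pd r₂ v =
      (1/4) * ((pd' r₂ u - pd' r₂ v) / (pd r₂ u - pd r₂ v))^2 := by
  set s := √(-3 * r₂)
  have hs : s ≠ 0 := (sqrt_pos.2 (by linarith)).ne'
  have hsinh : ∀ ξ ≠ 0, sinh (s * ξ) ≠ 0 := fun ξ hξ => sinh_ne_zero.2 (mul_ne_zero hs hξ)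
  have hsum : coth (s * u) + coth (s * v) ≠ 0 := by
    rw [coth_add_coth (hsinh u hu) (hsinh v hv), ← mul_add]
    exact div_ne_zero (hsinh _ huv) (mul_ne_zero (hsinh u hu) (hsinh v hv))
  have hdiff : coth (s * u) - coth (s * v) ≠ 0 := by
    rw [coth_sub_coth (hsinh u hu) (hsinh v hv), ← mul_sub]
    exact div_ne_zero (hsinh _ (sub_ne_zero.2 (sub_ne_zero.1 huv').symm))
      (mul_ne_zero (hsinh u hu) (hsinh v hv))
  rw [pd_eq_wpCoth hr.le (hsinh _ huv), pd_eq_wpCoth hr.le (hsinh u hu),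
    pd_eq_wpCoth hr.le (hsinh v hv), pd'_eq_wpCothDeriv hr.le, pd'_eq_wpCothDeriv hr.le, mul_add,
    coth_add (hsinh u hu) (hsinh v hv)]
  exact wpCoth_add_law hs hsum hdiff
end
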